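/- Let s ∈ (0,1), m > 0, and let g : ℝ → ℝ be continuous with g(τ) = 0 for τ ≤ 0, −∞ < liminf_{τ→0⁺} g(τ)/τ, limsup_{τ→0⁺} g(τ)/τ = −m, and limsup_{τ→+∞} g(τ)/τ^{2*_s−1} ≤ 0. Define g₁(τ) := max{g(τ) + mτ, 0} and g₂(τ) := g₁(τ) − g(τ) for τ ≥ 0 (and g₁ = g₂ = 0 for τ ≤ 0), and G_i(τ) := ∫₀^τ g_i(ζ)dζ. Then: (a) g₂(τ) ≥ mτ for all τ ≥ 0; (b) lim_{τ→0⁺} g₁(τ)/τ = 0; (c) lim_{τ→+∞} g₁(τ)/τ^{2*_s−1} = 0; (d) for every ε > 0 there exists C_ε > 0 with g₁(τ) ≤ ε g₂(τ) + C_ε τ^{2*_s−1} for all τ ≥ 0; (e) for every ε > 0 there exists C_ε > 0 with G₁(τ) ≤ ε G₂(τ) + C_ε |τ|^{2*_s} for all τ ∈ ℝ. -/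

import Mathlib

open MeasureTheory Filter Topology ENNReal

noncomputable section

/-- Euclidean 3-space. -/
abbrev E3 : Type := EuclideanSpace ℝ (Fin 3)

/-- The Fourier(-Plancherel) transform of a real-valued function on `ℝ³`
(given by the Fourier integral, which represents the Plancherel transform). -/
def FT (u : E3 → ℝ) : E3 → ℂ :=
  FourierTransform.fourier (fun x => (u x : ℂ))

/-- `‖(-Δ)^{α/2} u‖₂² = ∫ |ξ|^{2α} |û ξ|² dξ`, as a value in `[0,∞]`. -/
def fracNormSq (α : ℝ) (u : E3 → ℝ) : ℝ≥0∞ :=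
  ∫⁻ ξ : E3, ENNReal.ofReal (‖ξ‖ ^ (2 * α) * ‖FT u ξ‖ ^ 2)

/-- Membership in the fractional Sobolev space `H^α(ℝ³)`. -/
def memHs (α : ℝ) (u : E3 → ℝ) : Prop :=
  MemLp u 2 volume ∧ fracNormSq α u < ⊤

/-- The `H^α` norm `(‖u‖₂² + ‖(-Δ)^{α/2}u‖₂²)^{1/2}`, as a value in `[0,∞]`. -/
def hsNorm (α : ℝ) (u : E3 → ℝ) : ℝ≥0∞ :=
  (eLpNorm u 2 volume ^ 2 + fracNormSq α u) ^ ((1 : ℝ) / 2)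

/-- `u` is a radial function. -/
def IsRadial (u : E3 → ℝ) : Prop := ∀ x y : E3, ‖x‖ = ‖y‖ → u x = u y

/-- The critical fractional Sobolev exponent `2*_α = 6/(3-2α)`. -/
def critExp (α : ℝ) : ℝ := 6 / (3 - 2 * α)

/-- The bilinear form `∫ |ξ|^{2s} û(ξ) conj(v̂(ξ)) dξ`. -/
def fracForm (s : ℝ) (u v : E3 → ℝ) : ℂ :=
  ∫ ξ : E3, ((‖ξ‖ ^ (2 * s) : ℝ) : ℂ) * FT u ξ * (starRingEnd ℂ) (FT v ξ)

/-- `G(τ) = ∫₀^τ g`. -/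
def primitive (g : ℝ → ℝ) (τ : ℝ) : ℝ := ∫ ζ in (0 : ℝ)..τ, g ζ

/-- The constant `c_t` in the `t`-Riesz potential. -/
def rieszConst (t : ℝ) : ℝ :=
  Real.Gamma ((3 - 2 * t) / 2) / (Real.pi ^ ((3 : ℝ) / 2) * 2 ^ (2 * t) * Real.Gamma t)

/-- The solution `φ_u^t(x) = λ c_t ∫ u(y)² |x-y|^{2t-3} dy` of `(-Δ)^t φ = λ u²`. -/
def poissonPhi (t lam : ℝ) (u : E3 → ℝ) (x : E3) : ℝ :=
  lam * rieszConst t * ∫ y : E3, u y ^ 2 * ‖x - y‖ ^ (2 * t - 3)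

/-- `u` is a weak solution of the fractional Schrödinger–Poisson system
`(-Δ)^s u + λ φ u = g(u)`, `(-Δ)^t φ = λ u²` (with `φ = φ_u^t`). -/
def IsWeakSolSP (s t lam : ℝ) (g : ℝ → ℝ) (u : E3 → ℝ) : Prop :=
  memHs s u ∧ ∀ v : E3 → ℝ, memHs s v →
    fracForm s u v + (lam : ℂ) * ((∫ x : E3, poissonPhi t lam u x * u x * v x : ℝ) : ℂ)
      = ((∫ x : E3, g (u x) * v x : ℝ) : ℂ)

/-- `u` is a weak solution of the limit equation `(-Δ)^s u = g(u)` in `ℝ³`. -/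
def IsWeakSolLimit (s : ℝ) (g : ℝ → ℝ) (u : E3 → ℝ) : Prop :=
  memHs s u ∧ ∀ v : E3 → ℝ, memHs s v →
    fracForm s u v = ((∫ x : E3, g (u x) * v x : ℝ) : ℂ)

/-- The energy functional `L(u) = ½‖(-Δ)^{s/2}u‖₂² - ∫ G(u)` of the limit equation. -/
def energyL (s : ℝ) (g : ℝ → ℝ) (u : E3 → ℝ) : ℝ :=
  (1 / 2) * (fracNormSq s u).toReal - ∫ x : E3, primitive g (u x)

/-- `u` is a ground state of `(-Δ)^s u = g(u)`: a nontrivial weak solution with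
least energy among nontrivial weak solutions. -/
def IsGroundState (s : ℝ) (g : ℝ → ℝ) (u : E3 → ℝ) : Prop :=
  IsWeakSolLimit s g u ∧ ¬ u =ᵐ[volume] (0 : E3 → ℝ) ∧
    ∀ w : E3 → ℝ, IsWeakSolLimit s g w → ¬ w =ᵐ[volume] (0 : E3 → ℝ) →
      energyL s g u ≤ energyL s g w

/-- The nonlocal interaction term
`T(u) = ∬ u(x)² u(y)² |x-y|^{2t-3} dx dy`, as a value in `[0,∞]`. -/
def interaction (t : ℝ) (u : E3 → ℝ) : ℝ≥0∞ :=
  ∫⁻ x : E3, ∫⁻ y : E3, ENNReal.ofReal (u x ^ 2 * u y ^ 2 * ‖x - y‖ ^ (2 * t - 3))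

end


section AuxNonlin
open Filter Topology

private lemma critExp_gt_two {s : ℝ} (hs : s ∈ Set.Ioo (0 : ℝ) 1) :
    2 < critExp s := by
  have h1 : (0:ℝ) < 3 - 2 * s := by nlinarith [hs.1, hs.2]
  have h2 : 2 * (3 - 2 * s) < 6 := by nlinarith [hs.1]
  rw [critExp, lt_div_iff₀ h1]
  linarith

end AuxNonlin

theorem nonlinearity_decomposition
    (s m : ℝ) (hs : s ∈ Set.Ioo (0 : ℝ) 1) (hm : 0 < m)
    (g : ℝ → ℝ) (hgc : Continuous g) (hgneg : ∀ τ : ℝ, τ ≤ 0 → g τ = 0)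
    (hg2a : (⊥ : EReal) < Filter.liminf (fun τ : ℝ => ((g τ / τ : ℝ) : EReal)) (𝓝[>] (0 : ℝ)))
    (hg2b : Filter.limsup (fun τ : ℝ => ((g τ / τ : ℝ) : EReal)) (𝓝[>] (0 : ℝ))
      = ((-m : ℝ) : EReal))
    (hg3 : Filter.limsup (fun τ : ℝ => ((g τ / τ ^ (critExp s - 1) : ℝ) : EReal)) atTop
      ≤ (0 : EReal))
    (g₁ g₂ : ℝ → ℝ)
    (hg₁ : ∀ τ : ℝ, g₁ τ = max (g τ + m * τ) 0) (hg₂ : ∀ τ : ℝ, g₂ τ = g₁ τ - g τ) :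
    (∀ τ : ℝ, 0 ≤ τ → m * τ ≤ g₂ τ) ∧
    Filter.Tendsto (fun τ : ℝ => g₁ τ / τ) (𝓝[>] (0 : ℝ)) (𝓝 0) ∧
    Filter.Tendsto (fun τ : ℝ => g₁ τ / τ ^ (critExp s - 1)) atTop (𝓝 0) ∧
    (∀ ε > (0 : ℝ), ∃ C > (0 : ℝ), ∀ τ : ℝ, 0 ≤ τ →
      g₁ τ ≤ ε * g₂ τ + C * τ ^ (critExp s - 1)) ∧
    (∀ ε > (0 : ℝ), ∃ C > (0 : ℝ), ∀ τ : ℝ,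
      primitive g₁ τ ≤ ε * primitive g₂ τ + C * |τ| ^ critExp s) := by
  obtain ⟨hs0, hs1⟩ := hs
  set p : ℝ := critExp s with hp
  have hp2 : 2 < p := critExp_gt_two ⟨hs0, hs1⟩
  have hp0 : 0 < p := by linarith
  have hg1nn : ∀ τ, 0 ≤ g₁ τ := fun τ => by rw [hg₁]; exact le_max_right _ _
  have hg1c : Continuous g₁ := by
    have h : g₁ = fun τ => max (g τ + m * τ) 0 := funext hg₁
    rw [h]
    exact (hgc.add (continuous_const.mul continuous_id)).max continuous_const
  have hg2c : Continuous g₂ := by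
    have h : g₂ = fun τ => g₁ τ - g τ := funext hg₂
    rw [h]; exact hg1c.sub hgc
  have ha : ∀ τ : ℝ, 0 ≤ τ → m * τ ≤ g₂ τ := by
    intro τ _
    rw [hg₂, hg₁]
    have := le_max_left (g τ + m * τ) 0
    linarith
  have hg1neg : ∀ τ : ℝ, τ ≤ 0 → g₁ τ = 0 := by
    intro τ hτ
    rw [hg₁, hgneg τ hτ, zero_add, max_eq_right]
    exact mul_nonpos_of_nonneg_of_nonpos hm.le hτ
  have hg2neg : ∀ τ : ℝ, τ ≤ 0 → g₂ τ = 0 := by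
    intro τ hτ; rw [hg₂, hg1neg τ hτ, hgneg τ hτ, sub_zero]
  have hkey : ∀ τ : ℝ, 0 < τ → ∀ r : ℝ, 0 < r →
      g₁ τ / r = max (g τ / r + m * τ / r) 0 := by
    intro τ hτ r hr
    rw [hg₁, ← max_div_div_right hr.le, zero_div, add_div]
  have hb : Filter.Tendsto (fun τ : ℝ => g₁ τ / τ) (𝓝[>] (0:ℝ)) (𝓝 0) := by
    rw [Metric.tendsto_nhds]
    intro ε hε
    have hlt : Filter.limsup (fun τ : ℝ => ((g τ / τ : ℝ) : EReal)) (𝓝[>] (0:ℝ))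
        < ((-m + ε : ℝ) : EReal) := by
      rw [hg2b]; exact_mod_cast (by linarith : -m < -m + ε)
    have hev := eventually_lt_of_limsup_lt hlt
    filter_upwards [hev, self_mem_nhdsWithin] with τ h1 h2
    have hτ : (0:ℝ) < τ := h2
    have h1' : g τ / τ < -m + ε := EReal.coe_lt_coe_iff.mp h1
    have hnn : 0 ≤ g₁ τ / τ := div_nonneg (hg1nn τ) hτ.le
    rw [Real.dist_eq, sub_zero, abs_of_nonneg hnn, hkey τ hτ τ hτ]
    have hmm : m * τ / τ = m := by
      rw [mul_div_assoc, div_self hτ.ne', mul_one]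
    rw [hmm, max_lt_iff]
    exact ⟨by linarith, hε⟩
  have hc : Filter.Tendsto (fun τ : ℝ => g₁ τ / τ ^ (p - 1)) atTop (𝓝 0) := by
    rw [Metric.tendsto_nhds]
    intro ε hε
    have hlt : Filter.limsup (fun τ : ℝ => ((g τ / τ ^ (p-1) : ℝ) : EReal)) atTop
        < ((ε/2 : ℝ) : EReal) := by
      refine lt_of_le_of_lt hg3 ?_
      exact_mod_cast (by linarith : (0:ℝ) < ε/2)
    have hev := eventually_lt_of_limsup_lt hlt
    have htend : Filter.Tendsto (fun τ : ℝ => m * τ ^ (-(p-2))) atTop (𝓝 0) := by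
      simpa using (tendsto_rpow_neg_atTop (by linarith : (0:ℝ) < p - 2)).const_mul m
    have hev2 : ∀ᶠ τ : ℝ in atTop, m * τ ^ (-(p-2)) < ε/2 :=
      htend.eventually (gt_mem_nhds (by linarith : (0:ℝ) < ε/2))
    filter_upwards [hev, hev2, eventually_gt_atTop (0:ℝ)] with τ h1 h2 hτ
    have hr : (0:ℝ) < τ ^ (p-1) := Real.rpow_pos_of_pos hτ _
    have h1' : g τ / τ ^ (p-1) < ε/2 := EReal.coe_lt_coe_iff.mp h1
    have hnn : 0 ≤ g₁ τ / τ ^ (p-1) := div_nonneg (hg1nn τ) hr.le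
    rw [Real.dist_eq, sub_zero, abs_of_nonneg hnn, hkey τ hτ _ hr]
    have heq : m * τ / τ ^ (p-1) = m * τ ^ (-(p-2)) := by
      rw [mul_div_assoc]
      congr 1
      rw [eq_comm, show -(p-2) = 1 - (p-1) by ring, Real.rpow_sub hτ, Real.rpow_one]
    rw [heq, max_lt_iff]
    exact ⟨by linarith, by linarith⟩
  have hd : ∀ ε > (0:ℝ), ∃ C > (0:ℝ), ∀ τ : ℝ, 0 ≤ τ →
      g₁ τ ≤ ε * g₂ τ + C * τ ^ (p - 1) := by
    intro ε hε
    have hev1 : ∀ᶠ τ : ℝ in 𝓝[>] (0:ℝ), g₁ τ / τ < ε * m :=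
      hb.eventually (gt_mem_nhds (by positivity))
    rw [eventually_nhdsWithin_iff, Metric.eventually_nhds_iff] at hev1
    obtain ⟨δ, hδ, hδs⟩ := hev1
    have hev2 : ∀ᶠ τ : ℝ in atTop, g₁ τ / τ ^ (p-1) < 1 :=
      hc.eventually (gt_mem_nhds one_pos)
    obtain ⟨M₀, hM₀⟩ := hev2.exists_forall_of_atTop
    obtain ⟨M, hMM₀, hδM⟩ : ∃ M : ℝ, M₀ ≤ M ∧ δ ≤ M :=
      ⟨max M₀ δ, le_max_left _ _, le_max_right _ _⟩
    have hcomp : IsCompact (Set.Icc (δ/2) M) := isCompact_Icc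
    have hne : (Set.Icc (δ/2) M).Nonempty := ⟨δ/2, le_refl _, by linarith⟩
    obtain ⟨τ₀, hτ₀mem, hτ₀⟩ := hcomp.exists_isMaxOn hne hg1c.continuousOn
    obtain ⟨K, hK⟩ : ∃ K : ℝ, K = g₁ τ₀ := ⟨_, rfl⟩
    have hδ2 : (0:ℝ) < δ/2 := by linarith
    have hδp : (0:ℝ) < (δ/2) ^ (p-1) := Real.rpow_pos_of_pos hδ2 _
    obtain ⟨C, hC⟩ : ∃ C : ℝ, C = |K| / (δ/2) ^ (p-1) + 1 := ⟨_, rfl⟩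
    have hCpos : 0 < C := by rw [hC]; positivity
    refine ⟨C, hCpos, ?_⟩
    intro τ hτ
    rcases eq_or_lt_of_le hτ with h0 | hτpos
    · rw [← h0, hg1neg 0 le_rfl, hg2neg 0 le_rfl,
        Real.zero_rpow (by linarith : p - 1 ≠ 0)]
      norm_num
    have hg2nn : 0 ≤ g₂ τ := le_trans (by positivity) (ha τ hτ)
    have hrpnn : 0 ≤ τ ^ (p-1) := Real.rpow_nonneg hτ _
    rcases lt_or_ge τ δ with hlo | hhi
    · have hdd : dist τ 0 < δ := by
        rw [Real.dist_eq, sub_zero, abs_of_pos hτpos]; exact hlo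
      have h1 := hδs hdd hτpos
      rw [div_lt_iff₀ hτpos] at h1
      have h2 : ε * (m * τ) ≤ ε * g₂ τ := mul_le_mul_of_nonneg_left (ha τ hτ) hε.le
      nlinarith [mul_nonneg hCpos.le hrpnn]
    rcases le_or_gt M τ with hbig | hmid
    · have h1 : g₁ τ / τ ^ (p-1) < 1 := hM₀ τ (le_trans hMM₀ hbig)
      have hr : (0:ℝ) < τ ^ (p-1) := Real.rpow_pos_of_pos hτpos _
      rw [div_lt_one hr] at h1
      have hC1 : (1:ℝ) ≤ C := by
        have h2 : 0 ≤ |K| / (δ/2) ^ (p-1) := by positivity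
        rw [hC]; linarith
      have h3 : 1 * τ ^ (p-1) ≤ C * τ ^ (p-1) :=
        mul_le_mul_of_nonneg_right hC1 hrpnn
      have h4 : 0 ≤ ε * g₂ τ := mul_nonneg hε.le hg2nn
      linarith
    · have hmem : τ ∈ Set.Icc (δ/2) M := ⟨by linarith, hmid.le⟩
      have h1 : g₁ τ ≤ K := by rw [hK]; exact hτ₀ hmem
      have h2 : (δ/2) ^ (p-1) ≤ τ ^ (p-1) :=
        Real.rpow_le_rpow hδ2.le (by linarith) (by linarith)
      have h3 : |K| = (|K| / (δ/2) ^ (p-1)) * (δ/2) ^ (p-1) := by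
        rw [div_mul_cancel₀ _ hδp.ne']
      have h4 : (|K| / (δ/2) ^ (p-1)) * (δ/2) ^ (p-1)
          ≤ (|K| / (δ/2) ^ (p-1)) * τ ^ (p-1) :=
        mul_le_mul_of_nonneg_left h2 (by positivity)
      have h5 : K ≤ |K| := le_abs_self K
      have h6 : (|K| / (δ/2) ^ (p-1)) * τ ^ (p-1) ≤ C * τ ^ (p-1) := by
        apply mul_le_mul_of_nonneg_right _ hrpnn
        rw [hC]; linarith
      have h7 : 0 ≤ ε * g₂ τ := mul_nonneg hε.le hg2nn
      linarith
  refine ⟨ha, hb, hc, hd, ?_⟩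
  intro ε hε
  obtain ⟨C, hCpos, hCle⟩ := hd ε hε
  refine ⟨C / p, by positivity, ?_⟩
  intro τ
  rcases le_or_gt τ 0 with hτ | hτ
  · have hzz : ∀ (f : ℝ → ℝ), (∀ ζ : ℝ, ζ ≤ 0 → f ζ = 0) →
        primitive f τ = 0 := by
      intro f hf
      simp only [primitive]
      rw [intervalIntegral.integral_congr (g := fun _ => (0:ℝ))
        (fun ζ hζ => hf ζ (by
          rcases Set.mem_uIcc.mp hζ with h | h
          · linarith [h.2]
          · exact h.2))]
      simp
    rw [hzz g₁ hg1neg, hzz g₂ hg2neg]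
    have h0 : 0 ≤ C / p * |τ| ^ p := by positivity
    linarith
  · have hrc : Continuous fun x : ℝ => x ^ (p-1) := by
      rw [continuous_iff_continuousAt]
      exact fun x => Real.continuousAt_rpow_const x _ (Or.inr (by linarith))
    have hint1 : IntervalIntegrable g₁ MeasureTheory.volume 0 τ :=
      hg1c.intervalIntegrable _ _
    have hint2 : IntervalIntegrable (fun ζ => ε * g₂ ζ + C * ζ ^ (p-1))
        MeasureTheory.volume 0 τ :=
      ((continuous_const.mul hg2c).add (continuous_const.mul hrc)).intervalIntegrable _ _
    have hmono : primitive g₁ τ ≤ ∫ ζ in (0:ℝ)..τ, (ε * g₂ ζ + C * ζ ^ (p-1)) := by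
      simp only [primitive]
      apply intervalIntegral.integral_mono_on hτ.le hint1 hint2
      intro ζ hζ
      exact hCle ζ hζ.1
    have hsplit : (∫ ζ in (0:ℝ)..τ, (ε * g₂ ζ + C * ζ ^ (p-1)))
        = ε * primitive g₂ τ + C * (τ ^ p / p) := by
      rw [intervalIntegral.integral_add (f := fun ζ => ε * g₂ ζ) (g := fun ζ => C * ζ ^ (p-1))
        ((continuous_const.mul hg2c).intervalIntegrable _ _)
        ((continuous_const.mul hrc).intervalIntegrable _ _),
        intervalIntegral.integral_const_mul, intervalIntegral.integral_const_mul,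
        integral_rpow (Or.inl (by linarith : (-1:ℝ) < p - 1)),
        show p - 1 + 1 = p by ring, Real.zero_rpow hp0.ne', sub_zero]
      simp only [primitive]
    rw [hsplit] at hmono
    have habs : C * (τ ^ p / p) = C / p * |τ| ^ p := by
      rw [abs_of_pos hτ]; ring
    rw [habs] at hmono
    exact hmono
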